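/- Fix λ ∈ (0, 1/2]. For each d ≥ 2 let ψ_d ∈ ℂ^d be a unit vector, ρ_d = |ψ_d⟩⟨ψ_d|, and let M_λ^{(d)} be the binary POVM with elements ((1−2λ)|ψ_d⟩⟨ψ_d| + 2λ(I_d/2), (1−2λ)(I_d−|ψ_d⟩⟨ψ_d|) + 2λ(I_d/2)). Then lim_{d→∞} S_{M_λ^{(d)}}(ρ_d) / log d = 1. Consequently, there is no continuous function f : [0,1] → ℝ with f(0) = 0 such that S_{M_λ^{(d)}}(ρ_d) ≤ f(λ)·log d holds for all d and all λ ∈ (0,1/2]. -/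

import Mathlib

open scoped BigOperators ComplexOrder Classical

noncomputable section

/-- Shannon entropy of a finitely supported distribution, with `0 log 0 = 0`. -/
def shannonEntropy {ι : Type*} [Fintype ι] (p : ι → ℝ) : ℝ :=
  -∑ i, p i * Real.log (p i)

/-- A quantum state: positive semidefinite with unit trace. -/
def IsState {n : Type*} [Fintype n] (ρ : Matrix n n ℂ) : Prop :=
  ρ.PosSemidef ∧ ρ.trace = 1

/-- A POVM: positive semidefinite elements summing to the identity. -/
def IsPOVM {ι n : Type*} [Fintype ι] [Fintype n] [DecidableEq n]
    (M : ι → Matrix n n ℂ) : Prop :=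
  (∀ i, (M i).PosSemidef) ∧ ∑ i, M i = 1

/-- Observational entropy `S_M(ρ) = -∑ p_i log (p_i / V_i)`. -/
def obsEntropy {ι n : Type*} [Fintype ι] [Fintype n]
    (M : ι → Matrix n n ℂ) (ρ : Matrix n n ℂ) : ℝ :=
  -∑ i, ((M i * ρ).trace.re * Real.log ((M i * ρ).trace.re / (M i).trace.re))

/-- The function `g(x) = -x log x + (1+x) log(1+x)`. -/
def gFun (x : ℝ) : ℝ := -(x * Real.log x) + (1 + x) * Real.log (1 + x)

/-- Trace norm of a square complex matrix. -/
def traceNorm {n : Type*} [Fintype n] [DecidableEq n] (X : Matrix n n ℂ) : ℝ :=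
  ((((Matrix.posSemidef_conjTranspose_mul_self X).1.eigenvectorUnitary : Matrix n n ℂ) *
      Matrix.diagonal (fun i =>
        (Real.sqrt ((Matrix.posSemidef_conjTranspose_mul_self X).1.eigenvalues i) : ℂ)) *
      (star ((Matrix.posSemidef_conjTranspose_mul_self X).1.eigenvectorUnitary :
        Matrix n n ℂ)))).trace.re

/-- Matrix logarithm of a Hermitian matrix via the spectral decomposition,
with the convention `log 0 = 0` on the kernel; junk value `0` on non-Hermitian input. -/
def matLog {n : Type*} [Fintype n] [DecidableEq n] (A : Matrix n n ℂ) : Matrix n n ℂ :=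
  if hA : A.IsHermitian then
    (hA.eigenvectorUnitary : Matrix n n ℂ) *
      Matrix.diagonal (fun i => (Real.log (hA.eigenvalues i) : ℂ)) *
      (star (hA.eigenvectorUnitary : Matrix n n ℂ))
  else 0

/-- Von Neumann entropy `S(ρ) = -tr(ρ log ρ)`. -/
def vnEntropy {n : Type*} [Fintype n] [DecidableEq n] (ρ : Matrix n n ℂ) : ℝ :=
  -((ρ * matLog ρ).trace.re)

/-- Quantum relative entropy, as an extended real number: `tr(μ (log μ - log ν))` when
`supp μ ⊆ supp ν` (both Hermitian), and `+∞` otherwise. -/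
def qRelEntropy {n : Type*} [Fintype n] [DecidableEq n] (μ ν : Matrix n n ℂ) : EReal :=
  if μ.IsHermitian ∧ ν.IsHermitian ∧
      LinearMap.range (Matrix.toLin' μ) ≤ LinearMap.range (Matrix.toLin' ν) then
    (((μ * (matLog μ - matLog ν)).trace.re : ℝ) : EReal)
  else ⊤

/-- Real-valued quantum relative entropy `tr(μ (log μ - log ν))` (meaningful when
`supp μ ⊆ supp ν`). -/
def qRelEntropyR {n : Type*} [Fintype n] [DecidableEq n] (μ ν : Matrix n n ℂ) : ℝ :=
  (μ * (matLog μ - matLog ν)).trace.re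


/-- The rank-one projector `|ψ⟩⟨ψ|`. -/
def pureState {d : ℕ} (ψ : Fin d → ℂ) : Matrix (Fin d) (Fin d) ℂ :=
  Matrix.vecMulVec ψ (star ψ)

/-- The binary POVM `((1-2λ)|ψ⟩⟨ψ| + 2λ(I/2), (1-2λ)(I - |ψ⟩⟨ψ|) + 2λ(I/2))`. -/
def binPOVM {d : ℕ} (lam : ℝ) (ψ : Fin d → ℂ) : Fin 2 → Matrix (Fin d) (Fin d) ℂ :=
  ![(1 - 2*lam) • pureState ψ + (2*lam) • ((1/2 : ℝ) • (1 : Matrix (Fin d) (Fin d) ℂ)),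
    (1 - 2*lam) • (1 - pureState ψ) + (2*lam) • ((1/2 : ℝ) • (1 : Matrix (Fin d) (Fin d) ℂ))]

/-! For the pure state `|ψ⟩⟨ψ|` the two outcomes have probabilities `1 - λ` and `λ`, while the
volumes `tr M₀ = 1 - 2λ + λd` and `tr M₁ = 2λ - 1 + (1 - λ)d` grow linearly in `d`. Hence
`S = h(λ) + (1 - λ) log tr M₀ + λ log tr M₁ = log d + O(1)` with `h` the binary entropy.
A bound `S ≤ f(λ) log d` then forces `f ≥ 1` on `(0, 1/2]`, and by continuity `f 0 ≥ 1`. -/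

open Filter Topology Real

lemma dotProduct_star_eq_one {d : ℕ} {ψ : Fin d → ℂ} (hψ : ∑ i, Complex.normSq (ψ i) = 1) :
    ψ ⬝ᵥ star ψ = 1 := by
  simp only [dotProduct, Pi.star_apply, Complex.star_def, Complex.mul_conj]
  exact_mod_cast hψ

lemma trace_pureState {d : ℕ} {ψ : Fin d → ℂ} (hψ : ∑ i, Complex.normSq (ψ i) = 1) :
    (pureState ψ).trace = 1 := by
  rw [pureState, Matrix.trace_vecMulVec, dotProduct_star_eq_one hψ]

lemma pureState_mul_self {d : ℕ} {ψ : Fin d → ℂ} (hψ : ∑ i, Complex.normSq (ψ i) = 1) :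
    pureState ψ * pureState ψ = pureState ψ := by
  rw [pureState, Matrix.vecMulVec_mul_vecMulVec, dotProduct_comm, dotProduct_star_eq_one hψ,
    one_smul]

section BinaryPOVM

variable {d : ℕ} {ψ : Fin d → ℂ} (l : ℝ)

lemma trace_binPOVM_zero (hψ : ∑ i, Complex.normSq (ψ i) = 1) :
    (binPOVM l ψ 0).trace = ((1 - 2 * l + l * d : ℝ) : ℂ) := by
  simp only [binPOVM, Matrix.cons_val_zero, Matrix.trace_add, Matrix.trace_smul,
    Matrix.trace_one, Fintype.card_fin, trace_pureState hψ, Complex.real_smul]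
  push_cast
  ring

lemma trace_binPOVM_one (hψ : ∑ i, Complex.normSq (ψ i) = 1) :
    (binPOVM l ψ 1).trace = ((2 * l - 1 + (1 - l) * d : ℝ) : ℂ) := by
  simp only [binPOVM, Matrix.cons_val_one, Matrix.cons_val_fin_one, Matrix.trace_add,
    Matrix.trace_smul, Matrix.trace_sub, Matrix.trace_one, Fintype.card_fin, trace_pureState hψ,
    Complex.real_smul]
  push_cast
  ring

lemma trace_binPOVM_zero_mul_pureState (hψ : ∑ i, Complex.normSq (ψ i) = 1) :
    (binPOVM l ψ 0 * pureState ψ).trace = ((1 - l : ℝ) : ℂ) := by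
  simp only [binPOVM, Matrix.cons_val_zero, add_mul, Matrix.smul_mul, one_mul,
    pureState_mul_self hψ, Matrix.trace_add, Matrix.trace_smul, trace_pureState hψ,
    Complex.real_smul]
  push_cast
  ring

lemma trace_binPOVM_one_mul_pureState (hψ : ∑ i, Complex.normSq (ψ i) = 1) :
    (binPOVM l ψ 1 * pureState ψ).trace = (l : ℂ) := by
  simp only [binPOVM, Matrix.cons_val_one, Matrix.cons_val_fin_one, add_mul, sub_mul,
    Matrix.smul_mul, one_mul, pureState_mul_self hψ, sub_self, smul_zero, zero_add,
    Matrix.trace_smul, trace_pureState hψ, Complex.real_smul]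
  push_cast
  ring

lemma one_le_of_sum_normSq_eq_one {d : ℕ} {ψ : Fin d → ℂ} (hψ : ∑ i, Complex.normSq (ψ i) = 1) :
    1 ≤ d := by
  rcases d with _ | d
  · simp at hψ
  · omega

lemma obsEntropy_binPOVM_pureState (hψ : ∑ i, Complex.normSq (ψ i) = 1) (hl₀ : 0 < l)
    (hl₁ : l < 1) :
    obsEntropy (binPOVM l ψ) (pureState ψ) =
      binEntropy l + (1 - l) * log (1 - 2 * l + l * d) + l * log (2 * l - 1 + (1 - l) * d) := by
  have hd : (1 : ℝ) ≤ d := mod_cast one_le_of_sum_normSq_eq_one hψ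
  have hV₀ : 0 < 1 - 2 * l + l * d := by nlinarith
  have hV₁ : 0 < 2 * l - 1 + (1 - l) * d := by nlinarith
  rw [obsEntropy, Fin.sum_univ_two, trace_binPOVM_zero_mul_pureState l hψ,
    trace_binPOVM_one_mul_pureState l hψ, trace_binPOVM_zero l hψ, trace_binPOVM_one l hψ]
  simp only [Complex.ofReal_re]
  rw [log_div (by linarith) hV₀.ne', log_div hl₀.ne' hV₁.ne', binEntropy, log_inv, log_inv]
  ring

end BinaryPOVM

lemma tendsto_log_affine_div_log (a : ℝ) {b : ℝ} (hb : 0 < b) :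
    Tendsto (fun x => log (a + b * x) / log x) atTop (𝓝 1) := by
  have hrest : Tendsto (fun x => (log b + (log (x + a / b) - log x)) / log x) atTop (𝓝 0) := by
    simpa using (tendsto_const_nhds.add (tendsto_log_comp_add_sub_log (a / b))).div_atTop
      tendsto_log_atTop
  refine Tendsto.congr' ?_ (by simpa using hrest.const_add 1)
  filter_upwards [eventually_gt_atTop 1, eventually_gt_atTop (-(a / b))] with x hx₁ hxa
  have hlog : log x ≠ 0 := (log_pos hx₁).ne'
  rw [show a + b * x = b * (x + a / b) by field_simp; ring, log_mul hb.ne' (by linarith)]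
  field_simp
  ring

lemma tendsto_obsEntropy_binPOVM_pureState_div_log (ψ : (d : ℕ) → Fin d → ℂ)
    (hψ : ∀ d, 2 ≤ d → ∑ i, Complex.normSq (ψ d i) = 1) {l : ℝ} (hl₀ : 0 < l) (hl₁ : l < 1) :
    Tendsto (fun d : ℕ => obsEntropy (binPOVM l (ψ d)) (pureState (ψ d)) / log d)
      atTop (𝓝 1) := by
  have hV₀ := (tendsto_log_affine_div_log (1 - 2 * l) hl₀).comp tendsto_natCast_atTop_atTop
  have hV₁ := (tendsto_log_affine_div_log (2 * l - 1) (sub_pos.2 hl₁)).comp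
    tendsto_natCast_atTop_atTop
  have hH := tendsto_const_nhds (x := binEntropy l).div_atTop
    (tendsto_log_atTop.comp tendsto_natCast_atTop_atTop)
  have hlim := (hH.add (hV₀.const_mul (1 - l))).add (hV₁.const_mul l)
  rw [zero_add, mul_one, mul_one, sub_add_cancel] at hlim
  refine Tendsto.congr' ?_ hlim
  filter_upwards [eventually_ge_atTop 2] with d hd
  simp only [Function.comp_apply]
  rw [obsEntropy_binPOVM_pureState l (hψ d hd) hl₀ hl₁]
  ring

lemma le_of_tendsto_div_of_le_mul {α : Type*} {F : Filter α} [F.NeBot] {u v : α → ℝ} {a c : ℝ}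
    (h : Tendsto (fun x => u x / v x) F (𝓝 a)) (hv : ∀ᶠ x in F, 0 < v x)
    (hle : ∀ᶠ x in F, u x ≤ c * v x) : a ≤ c :=
  le_of_tendsto h (by filter_upwards [hv, hle] with x hvx hx using (div_le_iff₀ hvx).2 hx)

theorem obsEntropy_no_measurement_asymptotic_bound
    (ψ : (d : ℕ) → Fin d → ℂ) (hψ : ∀ d, 2 ≤ d → ∑ i, Complex.normSq (ψ d i) = 1)
    (lam : ℝ) (hlam : lam ∈ Set.Ioc (0 : ℝ) (1/2)) :
    Filter.Tendsto
        (fun d : ℕ => obsEntropy (binPOVM lam (ψ d)) (pureState (ψ d)) / Real.log d)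
        Filter.atTop (nhds 1) ∧
      ¬ ∃ f : ℝ → ℝ, Continuous f ∧ f 0 = 0 ∧
        ∀ d : ℕ, 2 ≤ d → ∀ l ∈ Set.Ioc (0 : ℝ) (1/2),
          obsEntropy (binPOVM l (ψ d)) (pureState (ψ d)) ≤ f l * Real.log d := by
  have hlim : ∀ l ∈ Set.Ioc (0 : ℝ) (1/2), Tendsto
      (fun d : ℕ => obsEntropy (binPOVM l (ψ d)) (pureState (ψ d)) / log d) atTop (𝓝 1) :=
    fun l hl => tendsto_obsEntropy_binPOVM_pureState_div_log ψ hψ hl.1 (by linarith [hl.2])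
  refine ⟨hlim lam hlam, ?_⟩
  rintro ⟨f, hf, hf₀, hbound⟩
  have hf_ge : ∀ l ∈ Set.Ioc (0 : ℝ) (1/2), 1 ≤ f l := fun l hl =>
    le_of_tendsto_div_of_le_mul (hlim l hl)
      (eventually_gt_atTop 1 |>.mono fun d hd => log_pos (mod_cast hd))
      (eventually_atTop.2 ⟨2, fun d hd => hbound d hd l hl⟩)
  have hf₀_ge : 1 ≤ f 0 :=
    ge_of_tendsto (hf.continuousWithinAt (s := Set.Ioi 0) (x := 0)).tendsto
      (mem_of_superset (Ioc_mem_nhdsGT (by norm_num)) hf_ge)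
  linarith
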